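/- (Schatten-class from matrix decay, p ≤ 2) Let p ∈ (0,2], let M : ℝ^{2d} → (0,∞) be a tempered weight with Σ_{\tilde γ ∈ ℤ^{2d}} M(\tilde γ)^p < ∞, let (f_{\tilde γ})_{\tilde γ ∈ ℤ^{2d}} be a Parseval frame in a Hilbert space H, and let T be a bounded operator on H such that for every n ∈ ℕ there is C_n with |⟨f_{\tilde α}, T f_{\tilde γ}⟩| ≤ C_n ⟨\tilde α − \tilde γ⟩^{−n} M(\tilde γ) for all \tilde α, \tilde γ. Then Σ_{\tilde γ} ‖T f_{\tilde γ}‖^p < ∞; in particular, using that Σ_n ‖T f_n‖^p < ∞ over a frame characterizes the Schatten class 𝓑_p for p ∈ (0,2], T belongs to 𝓑_p(H). -/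

import Mathlib

/-!
By Parseval, `‖T f_γ‖² = ∑_α |⟨f_α, T f_γ⟩|²`, and since `p ≤ 2` the `ℓᵖ` quasi-norm dominates
the `ℓ²` norm, so `‖T f_γ‖ᵖ ≤ ∑_α |⟨f_α, T f_γ⟩|ᵖ`. Taking the decay estimate with `n p > 2d`,
the right-hand side is at most `Cᵖ M(γ)ᵖ ∑_α ⟨α⟩^(-np)`, a convergent lattice sum that does not
depend on `γ`; summing over `γ` then uses `∑_γ M(γ)ᵖ < ∞`.
-/

open Real

/-- Embedding of the lattice `ℤ^{2d}` into `ℝ^{2d}`. -/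
noncomputable def latt2 {d : ℕ} (α : Fin (2 * d) → ℤ) : EuclideanSpace ℝ (Fin (2 * d)) :=
  WithLp.toLp 2 (fun i => (α i : ℝ))

/-- Japanese bracket `⟨v⟩ = √(1 + ‖v‖²)` on `ℝ^{2d}`. -/
noncomputable def jb {d : ℕ} (v : EuclideanSpace ℝ (Fin (2 * d))) : ℝ :=
  Real.sqrt (1 + ‖v‖ ^ 2)

lemma latt2_sub {d : ℕ} (α γ : Fin (2 * d) → ℤ) : latt2 (α - γ) = latt2 α - latt2 γ := by
  ext i; simp [latt2]

lemma latt2_injective {d : ℕ} : Function.Injective (latt2 (d := d)) := by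
  intro α γ h
  funext i
  simpa [latt2] using congrArg (fun v => v i) h

@[simp] lemma latt2_zero {d : ℕ} : latt2 (0 : Fin (2 * d) → ℤ) = 0 := by
  ext i; simp [latt2]

lemma jb_pos {d : ℕ} (v : EuclideanSpace ℝ (Fin (2 * d))) : 0 < jb v :=
  Real.sqrt_pos.mpr (by positivity)

lemma norm_le_jb {d : ℕ} (v : EuclideanSpace ℝ (Fin (2 * d))) : ‖v‖ ≤ jb v :=
  Real.le_sqrt_of_sq_le (by linarith)

lemma summable_norm_latt2_rpow {d : ℕ} {r : ℝ} (hr : r < -(2 * d)) :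
    Summable (fun α : Fin (2 * d) → ℤ => ‖latt2 α‖ ^ r) := by
  let b := (EuclideanSpace.basisFun (Fin (2 * d)) ℝ).toBasis
  let e := (b.restrictScalars ℤ).equivFun.symm
  have hrank : Module.finrank ℤ (Submodule.span ℤ (Set.range b)) = 2 * d := by
    rw [ZLattice.rank ℝ, finrank_euclideanSpace_fin]
  have he : ∀ α, (e α : EuclideanSpace ℝ (Fin (2 * d))) = latt2 α := by
    intro α
    rw [Module.Basis.equivFun_symm_apply, Submodule.coe_sum]
    simp only [Submodule.coe_smul, Module.Basis.restrictScalars_apply]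
    ext i
    simp [b, latt2, Pi.single_apply]
  simpa [Function.comp_def, he] using
    e.summable_iff.mpr (ZLattice.summable_norm_rpow _ r (by rw [hrank]; exact_mod_cast hr))

lemma summable_jb_latt2_rpow_neg {d : ℕ} {s : ℝ} (hs : 2 * d < s) :
    Summable (fun α : Fin (2 * d) → ℤ => jb (latt2 α) ^ (-s)) := by
  refine (summable_norm_latt2_rpow (r := -s) (by linarith)).of_norm_bounded_eventually ?_
  filter_upwards [(Set.finite_singleton 0).compl_mem_cofinite] with α hα
  have hpos : 0 < ‖latt2 α‖ := by
    rw [norm_pos_iff, ← latt2_zero]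
    exact latt2_injective.ne hα
  rw [Real.norm_of_nonneg (Real.rpow_nonneg (jb_pos _).le _)]
  exact Real.rpow_le_rpow_of_nonpos hpos (norm_le_jb _) (by linarith)

lemma tsum_sq_rpow_le_tsum_rpow {ι : Type*} {b : ι → ℝ} (hb : ∀ i, 0 ≤ b i) {p : ℝ}
    (hp0 : 0 < p) (hp2 : p ≤ 2) (hsum : Summable fun i => b i ^ p) :
    (∑' i, b i ^ 2) ^ (p / 2) ≤ ∑' i, b i ^ p := by
  set S := ∑' i, b i ^ p
  have hS : 0 ≤ S := tsum_nonneg fun i => rpow_nonneg (hb i) p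
  have hbS : ∀ i, b i ≤ S ^ p⁻¹ := fun i => by
    calc b i = (b i ^ p) ^ p⁻¹ := (rpow_rpow_inv (hb i) hp0.ne').symm
      _ ≤ S ^ p⁻¹ := rpow_le_rpow (rpow_nonneg (hb i) p)
          (hsum.le_tsum i fun j _ => rpow_nonneg (hb j) p) (inv_nonneg.mpr hp0.le)
  -- `b² = bᵖ · b²⁻ᵖ`, and the second factor is at most `S^((2-p)/p)`
  have hsq : ∀ i, b i ^ 2 ≤ b i ^ p * S ^ (p⁻¹ * (2 - p)) := fun i => by
    calc b i ^ 2 = b i ^ p * b i ^ (2 - p) := by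
          rw [← rpow_add' (hb i) (by norm_num), add_sub_cancel, rpow_two]
      _ ≤ b i ^ p * (S ^ p⁻¹) ^ (2 - p) :=
          mul_le_mul_of_nonneg_left (rpow_le_rpow (hb i) (hbS i) (by linarith))
            (rpow_nonneg (hb i) p)
      _ = b i ^ p * S ^ (p⁻¹ * (2 - p)) := by rw [← rpow_mul hS]
  have hsum_sq : ∑' i, b i ^ 2 ≤ S ^ (2 / p) := by
    calc ∑' i, b i ^ 2 ≤ ∑' i, b i ^ p * S ^ (p⁻¹ * (2 - p)) :=
          ((hsum.mul_right _).of_nonneg_of_le (fun i => by positivity) hsq).tsum_le_tsum hsq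
            (hsum.mul_right _)
      _ = S ^ (2 / p) := by
          rw [tsum_mul_right, ← rpow_one_add' hS (by positivity)]
          congr 1
          field_simp
          ring
  calc (∑' i, b i ^ 2) ^ (p / 2) ≤ (S ^ (2 / p)) ^ (p / 2) :=
        rpow_le_rpow (tsum_nonneg fun i => sq_nonneg _) hsum_sq (by positivity)
    _ = S := by rw [← rpow_mul hS, div_mul_div_cancel₀ hp0.ne', div_self two_ne_zero, rpow_one]

section LatticeDecay

variable {d : ℕ} {b : (Fin (2 * d) → ℤ) → ℝ} {p s C m : ℝ} {γ : Fin (2 * d) → ℤ}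

lemma rpow_le_of_le_jb_sub (hb0 : ∀ α, 0 ≤ b α) (hp0 : 0 < p) (hC : 0 ≤ C) (hm : 0 ≤ m)
    (hb : ∀ α, b α ≤ C * jb (latt2 α - latt2 γ) ^ (-s) * m) (α : Fin (2 * d) → ℤ) :
    b α ^ p ≤ C ^ p * m ^ p * jb (latt2 (α - γ)) ^ (-(s * p)) := by
  have hj := (jb_pos (latt2 α - latt2 γ)).le
  calc b α ^ p ≤ (C * jb (latt2 α - latt2 γ) ^ (-s) * m) ^ p :=
        rpow_le_rpow (hb0 α) (hb α) hp0.le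
    _ = C ^ p * m ^ p * jb (latt2 (α - γ)) ^ (-(s * p)) := by
        rw [mul_rpow (by positivity) hm, mul_rpow hC (by positivity), ← rpow_mul hj,
          latt2_sub, neg_mul]
        ring

lemma summable_rpow_of_le_jb_sub (hb0 : ∀ α, 0 ≤ b α) (hp0 : 0 < p) (hC : 0 ≤ C) (hm : 0 ≤ m)
    (hsp : 2 * d < s * p) (hb : ∀ α, b α ≤ C * jb (latt2 α - latt2 γ) ^ (-s) * m) :
    Summable fun α => b α ^ p := by
  have hshift := (Equiv.subRight γ).summable_iff.mpr (summable_jb_latt2_rpow_neg hsp)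
  exact (hshift.mul_left (C ^ p * m ^ p)).of_nonneg_of_le (fun α => rpow_nonneg (hb0 α) p)
    (rpow_le_of_le_jb_sub hb0 hp0 hC hm hb)

lemma tsum_rpow_le_of_le_jb_sub (hb0 : ∀ α, 0 ≤ b α) (hp0 : 0 < p) (hC : 0 ≤ C) (hm : 0 ≤ m)
    (hsp : 2 * d < s * p) (hb : ∀ α, b α ≤ C * jb (latt2 α - latt2 γ) ^ (-s) * m) :
    ∑' α, b α ^ p ≤ C ^ p * m ^ p * ∑' α : Fin (2 * d) → ℤ, jb (latt2 α) ^ (-(s * p)) := by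
  have hshift := (Equiv.subRight γ).summable_iff.mpr (summable_jb_latt2_rpow_neg hsp)
  calc ∑' α, b α ^ p ≤ ∑' α, C ^ p * m ^ p * jb (latt2 (α - γ)) ^ (-(s * p)) :=
        (summable_rpow_of_le_jb_sub hb0 hp0 hC hm hsp hb).tsum_le_tsum
          (rpow_le_of_le_jb_sub hb0 hp0 hC hm hb) (hshift.mul_left _)
    _ = C ^ p * m ^ p * ∑' α, jb (latt2 α) ^ (-(s * p)) := by
        rw [tsum_mul_left]
        exact congrArg _ ((Equiv.subRight γ).tsum_eq fun α => jb (latt2 α) ^ (-(s * p)))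

end LatticeDecay

lemma norm_rpow_le_tsum_inner_rpow {ι 𝕜 H : Type*} [RCLike 𝕜] [NormedAddCommGroup H]
    [InnerProductSpace 𝕜 H] {f : ι → H} {g : H}
    (hg : ‖g‖ ^ 2 = ∑' i, ‖(inner 𝕜 (f i) g : 𝕜)‖ ^ 2) {p : ℝ} (hp0 : 0 < p) (hp2 : p ≤ 2)
    (hsum : Summable fun i => ‖(inner 𝕜 (f i) g : 𝕜)‖ ^ p) :
    ‖g‖ ^ p ≤ ∑' i, ‖(inner 𝕜 (f i) g : 𝕜)‖ ^ p := by
  calc ‖g‖ ^ p = (‖g‖ ^ 2) ^ (p / 2) := by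
        rw [← rpow_two, ← rpow_mul (norm_nonneg g), mul_div_cancel₀ p two_ne_zero]
    _ ≤ _ := hg ▸ tsum_sq_rpow_le_tsum_rpow (fun i => norm_nonneg _) hp0 hp2 hsum

theorem stmt16_general {d : ℕ} {H : Type*} [NormedAddCommGroup H] [InnerProductSpace ℂ H]
    (p : ℝ) (hp0 : 0 < p) (hp2 : p ≤ 2)
    (M : EuclideanSpace ℝ (Fin (2 * d)) → ℝ)
    (hMpos : ∀ u, 0 < M u)
    (hMsum : Summable (fun γ : Fin (2 * d) → ℤ => M (latt2 γ) ^ p))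
    (f : (Fin (2 * d) → ℤ) → H)
    (hParseval : ∀ g : H, ‖g‖ ^ 2 = ∑' γ : Fin (2 * d) → ℤ, ‖(inner ℂ (f γ) g : ℂ)‖ ^ 2)
    (T : H →L[ℂ] H)
    (hT : ∀ n : ℕ, ∃ Cn : ℝ, 0 < Cn ∧ ∀ α γ : Fin (2 * d) → ℤ,
      ‖(inner ℂ (f α) (T (f γ)) : ℂ)‖ ≤
        Cn * jb (latt2 α - latt2 γ) ^ (-(n : ℝ)) * M (latt2 γ)) :
    Summable (fun γ : Fin (2 * d) → ℤ => ‖T (f γ)‖ ^ p) := by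
  set n : ℕ := ⌊2 * (d : ℝ) / p⌋₊ + 1 with hn
  obtain ⟨C, hC, hdecay⟩ := hT n
  have hnp : 2 * (d : ℝ) < n * p := by
    have := Nat.lt_floor_add_one (2 * (d : ℝ) / p)
    rw [div_lt_iff₀ hp0] at this
    simpa [hn] using this
  set K := ∑' α : Fin (2 * d) → ℤ, jb (latt2 α) ^ (-(n * p))
  refine (hMsum.mul_left (C ^ p * K)).of_nonneg_of_le (fun γ => by positivity) fun γ => ?_
  have hm := (hMpos (latt2 γ)).le
  have hb0 : ∀ α, 0 ≤ ‖(inner ℂ (f α) (T (f γ)) : ℂ)‖ := fun α => norm_nonneg _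
  calc ‖T (f γ)‖ ^ p ≤ ∑' α, ‖(inner ℂ (f α) (T (f γ)) : ℂ)‖ ^ p :=
        norm_rpow_le_tsum_inner_rpow (hParseval _) hp0 hp2
          (summable_rpow_of_le_jb_sub hb0 hp0 hC.le hm hnp (hdecay · γ))
    _ ≤ C ^ p * M (latt2 γ) ^ p * K :=
        tsum_rpow_le_of_le_jb_sub hb0 hp0 hC.le hm hnp (hdecay · γ)
    _ = C ^ p * K * M (latt2 γ) ^ p := by ring

/-- Schatten-class criterion for `p ∈ (0,2]`: if `M` is a tempered weight with
`p`-summable lattice values, `(f_γ)` is a Parseval frame in `H`, and the matrix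
elements of the bounded operator `T` satisfy
`|⟨f_α, T f_γ⟩| ≤ C_n ⟨α-γ⟩^{-n} M(γ)` for every `n`, then
`Σ_γ ‖T f_γ‖^p < ∞` (so `T` is of Schatten class `𝓑_p` by Zhu's frame
characterization). -/
theorem stmt16 {d : ℕ} {H : Type*} [NormedAddCommGroup H] [InnerProductSpace ℂ H]
    [CompleteSpace H]
    (p : ℝ) (hp0 : 0 < p) (hp2 : p ≤ 2)
    (M : EuclideanSpace ℝ (Fin (2 * d)) → ℝ)
    (hMpos : ∀ u, 0 < M u)
    (hMtemp : ∃ a C : ℝ, 0 < a ∧ 0 < C ∧ ∀ u v, M (u + v) ≤ C * M u * jb v ^ a)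
    (hMsum : Summable (fun γ : Fin (2 * d) → ℤ => M (latt2 γ) ^ p))
    (f : (Fin (2 * d) → ℤ) → H)
    (hParseval : ∀ g : H, ‖g‖ ^ 2 = ∑' γ : Fin (2 * d) → ℤ, ‖(inner ℂ (f γ) g : ℂ)‖ ^ 2)
    (T : H →L[ℂ] H)
    (hT : ∀ n : ℕ, ∃ Cn : ℝ, 0 < Cn ∧ ∀ α γ : Fin (2 * d) → ℤ,
      ‖(inner ℂ (f α) (T (f γ)) : ℂ)‖ ≤
        Cn * jb (latt2 α - latt2 γ) ^ (-(n : ℝ)) * M (latt2 γ)) :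
    Summable (fun γ : Fin (2 * d) → ℤ => ‖T (f γ)‖ ^ p) :=
  stmt16_general p hp0 hp2 M hMpos hMsum f hParseval T hT
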